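/- Let H, ρ, F be as in the twist map setting, and assume additionally that all second partial derivatives of H are bounded in absolute value by some M > 0. Let u : ℝ → ℝ be C¹ with u(x + 1) = u(x), let c ∈ ℝ, and suppose the graph {(x, c + u'(x)) : x ∈ ℝ} is invariant under F, with F^q(x, c + u'(x)) = (x + p, c + u'(x)) for all x, for some integers p and q ≥ 1. Let α be the constant such that inf_{y}( u(y) + H(y, x) - c(x - y) ) = u(x) - α for all x. Then for every x₀ ∈ ℝ, the orbit x_k := π₁(F^k(x₀, c + u'(x₀))) satisfies Σ_{k=0}^{q-1} H(x_k, x_{k+1}) = c·p - q·α. -/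

import Mathlib

open Real

/-- Partial derivative of `H` in the first variable. -/
noncomputable def D1 (H : ℝ → ℝ → ℝ) (x x' : ℝ) : ℝ := deriv (fun t => H t x') x

/-- Partial derivative of `H` in the second variable. -/
noncomputable def D2 (H : ℝ → ℝ → ℝ) (x x' : ℝ) : ℝ := deriv (fun t => H x t) x'

/-- Mixed second partial derivative `∂₁₂H`. -/
noncomputable def D12 (H : ℝ → ℝ → ℝ) (x x' : ℝ) : ℝ := deriv (fun t => D1 H x t) x'

/-- Second partial derivative `∂₁₁H`. -/
noncomputable def D11 (H : ℝ → ℝ → ℝ) (x x' : ℝ) : ℝ := deriv (fun t => D1 H t x') x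

/-- Mixed second partial derivative `∂₂₁H`. -/
noncomputable def D21 (H : ℝ → ℝ → ℝ) (x x' : ℝ) : ℝ := deriv (fun t => D2 H t x') x

/-- Second partial derivative `∂₂₂H`. -/
noncomputable def D22 (H : ℝ → ℝ → ℝ) (x x' : ℝ) : ℝ := deriv (fun t => D2 H x t) x'

open Function Set

/-! Every point of the invariant graph `r = c + u'(x)` is calibrated, i.e.
`u(a) + H(a, b) - c(b - a) = u(b) - α` whenever `F(a, c + u'(a)) = (b, c + u'(b))`. Indeed the
twist makes `y ↦ u(y) + H(y, b) - c(b - y)` coercive, so the infimum defining `u(b) - α` is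
attained at some `y`; the first-order condition `c + u'(y) = -∂₁H(y, b)` says that `F` maps the
graph point over `y` to the one over `b`, and injectivity of `F` gives `y = a`. Summing the
calibration identity along the orbit telescopes to `c·p - q·α`, since `u` is `1`-periodic. -/

theorem Function.Periodic.exists_forall_abs_le {f : ℝ → ℝ} {T : ℝ} (hp : Periodic f T)
    (hT : T ≠ 0) (hf : Continuous f) : ∃ B, ∀ t, |f t| ≤ B := by
  obtain ⟨B, hB⟩ := isBounded_iff_forall_norm_le.1 (hp.isBounded_of_continuous hT hf)
  exact ⟨B, fun t => hB _ (mem_range_self t)⟩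

theorem Function.Periodic.deriv {f : ℝ → ℝ} {T : ℝ} (hp : Periodic f T) :
    Periodic (deriv f) T := fun x => by
  rw [← deriv_comp_add_const, show (fun y => f (y + T)) = f from funext hp]

theorem exists_forall_le_of_hasDerivAt {f f' : ℝ → ℝ} (hf : ∀ z, HasDerivAt f (f' z) z)
    {a b : ℝ} (hab : a ≤ b) (hleft : ∀ z ≤ a, f' z ≤ 0) (hright : ∀ z, b ≤ z → 0 ≤ f' z) :
    ∃ y, ∀ z, f y ≤ f z := by
  have hcont : Continuous f := continuous_iff_continuousAt.2 fun z => (hf z).continuousAt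
  obtain ⟨y, -, hmin⟩ := isCompact_Icc.exists_isMinOn (nonempty_Icc.2 hab) hcont.continuousOn
  have hanti : AntitoneOn f (Iic a) :=
    antitoneOn_of_hasDerivWithinAt_nonpos (convex_Iic a) hcont.continuousOn
      (fun z _ => (hf z).hasDerivWithinAt) fun z hz => hleft z (interior_subset hz : z ∈ _)
  have hmono : MonotoneOn f (Ici b) :=
    monotoneOn_of_hasDerivWithinAt_nonneg (convex_Ici b) hcont.continuousOn
      (fun z _ => (hf z).hasDerivWithinAt) fun z hz => hright z (interior_subset hz : z ∈ _)
  rw [isMinOn_iff] at hmin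
  refine ⟨y, fun z => ?_⟩
  rcases le_or_gt z a with hza | haz
  · exact (hmin a ⟨le_rfl, hab⟩).trans (hanti hza self_mem_Iic hza)
  rcases le_or_gt z b with hzb | hbz
  · exact hmin z ⟨haz.le, hzb⟩
  · exact (hmin b ⟨hab, le_rfl⟩).trans (hmono self_mem_Ici hbz.le hbz.le)

section GeneratingFunction

variable {H : ℝ → ℝ → ℝ}

theorem hasDerivAt_D1 (hH : Differentiable ℝ (uncurry H)) (a b : ℝ) :
    HasDerivAt (fun t => H t b) (D1 H a b) a :=
  (show DifferentiableAt ℝ (fun t => H t b) a from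
    (hH (a, b)).comp (g := uncurry H) (f := fun t => (t, b)) a
      (differentiableAt_id.prodMk (differentiableAt_const b))).hasDerivAt

theorem D1_eq_fderiv (hH : Differentiable ℝ (uncurry H)) (a b : ℝ) :
    D1 H a b = fderiv ℝ (uncurry H) (a, b) (1, 0) :=
  HasDerivAt.deriv (f := fun t => H t b) <|
    (hH (a, b)).hasFDerivAt.comp_hasDerivAt (l := uncurry H) a
      ((hasDerivAt_id' a).prodMk (hasDerivAt_const a b))

theorem contDiff_uncurry_D1 (hH : ContDiff ℝ 2 (uncurry H)) : ContDiff ℝ 1 (uncurry (D1 H)) := by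
  have hD1 : uncurry (D1 H) = fun p => fderiv ℝ (uncurry H) p (1, 0) :=
    funext fun p => D1_eq_fderiv (hH.differentiable (by norm_num)) p.1 p.2
  rw [hD1]
  exact (hH.fderiv_right (by norm_num)).clm_apply contDiff_const

theorem hasDerivAt_D1_right (hH : ContDiff ℝ 2 (uncurry H)) (a b : ℝ) :
    HasDerivAt (fun t => D1 H a t) (D12 H a b) b :=
  (show DifferentiableAt ℝ (fun t => D1 H a t) b from
    ((contDiff_uncurry_D1 hH).differentiable one_ne_zero (a, b)).comp b
      ((differentiableAt_const a).prodMk differentiableAt_id)).hasDerivAt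

theorem D1_add_one (hper : ∀ x x', H (x + 1) (x' + 1) = H x x') (a b : ℝ) :
    D1 H (a + 1) (b + 1) = D1 H a b := by
  have hshift : (fun t => H t (b + 1)) = fun t => H (t - 1) b :=
    funext fun t => by rw [← hper (t - 1) b, sub_add_cancel]
  rw [D1, hshift, deriv_comp_sub_const (f := fun t => H t b), add_sub_cancel_right, D1]

theorem exists_forall_abs_D1_diag_le (hH : ContDiff ℝ 2 (uncurry H))
    (hper : ∀ x x', H (x + 1) (x' + 1) = H x x') : ∃ B, ∀ t, |D1 H t t| ≤ B :=
  Periodic.exists_forall_abs_le (fun t => D1_add_one hper t t) one_ne_zero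
    ((contDiff_uncurry_D1 hH).continuous.comp (continuous_id.prodMk continuous_id))

theorem D1_le_sub_mul {ρ : ℝ} (hH : ContDiff ℝ 2 (uncurry H))
    (htwist : ∀ x x', D12 H x x' ≤ -ρ) (a : ℝ) {s t : ℝ} (hst : s ≤ t) :
    D1 H a t ≤ D1 H a s - ρ * (t - s) := by
  have h := image_sub_le_mul_sub_of_deriv_le (f := fun t => D1 H a t)
    (fun t => (hasDerivAt_D1_right hH a t).differentiableAt)
    (fun t => (hasDerivAt_D1_right hH a t).deriv ▸ htwist a t) hst
  linarith

theorem hasDerivAt_laxOleinik_integrand {u : ℝ → ℝ} (hH : Differentiable ℝ (uncurry H))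
    (hu : Differentiable ℝ u) (c b z : ℝ) :
    HasDerivAt (fun y => u y + H y b - c * (b - y)) (deriv u z + D1 H z b + c) z := by
  have hlin : HasDerivAt (fun y => c * (b - y)) (-c) z := by
    simpa using ((hasDerivAt_id z).const_sub b).const_mul c
  simpa [sub_neg_eq_add] using ((hu z).hasDerivAt.fun_add (hasDerivAt_D1 hH z b)).fun_sub hlin

/-- The twist makes the Lax–Oleinik integrand coercive: its derivative `u' + ∂₁H(·, b) + c` has
the sign of `y - b` once `|y - b| ≥ (B + U + |c|) / ρ`, with `B`, `U` bounds of `|∂₁H|` on the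
diagonal and of `|u'|`. -/
theorem exists_laxOleinik_minimizer {ρ : ℝ} {u : ℝ → ℝ} (hH : ContDiff ℝ 2 (uncurry H))
    (hper : ∀ x x', H (x + 1) (x' + 1) = H x x') (hρ : 0 < ρ)
    (htwist : ∀ x x', D12 H x x' ≤ -ρ) (hu : ContDiff ℝ 1 u) (huper : Periodic u 1)
    (c b : ℝ) : ∃ y, ∀ z, u y + H y b - c * (b - y) ≤ u z + H z b - c * (b - z) := by
  obtain ⟨B, hB⟩ := exists_forall_abs_D1_diag_le hH hper
  obtain ⟨U, hU⟩ := huper.deriv.exists_forall_abs_le one_ne_zero (hu.continuous_deriv le_rfl)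
  have hB0 : 0 ≤ B := (abs_nonneg _).trans (hB 0)
  have hU0 : 0 ≤ U := (abs_nonneg _).trans (hU 0)
  set K := (B + U + |c|) / ρ
  have hK : ρ * K = B + U + |c| := mul_div_cancel₀ _ hρ.ne'
  have hK0 : 0 ≤ K := by positivity
  refine exists_forall_le_of_hasDerivAt (hasDerivAt_laxOleinik_integrand
    (hH.differentiable (by norm_num)) (hu.differentiable one_ne_zero) c b) (a := b - K) (b := b + K)
    (by linarith) (fun z hz => ?_) (fun z hz => ?_)
  · have hD1 := D1_le_sub_mul hH htwist z (show z ≤ b by linarith)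
    have hdist : ρ * K ≤ ρ * (b - z) := mul_le_mul_of_nonneg_left (by linarith) hρ.le
    linarith [le_abs_self (D1 H z z), le_abs_self (deriv u z), le_abs_self c, hB z, hU z]
  · have hD1 := D1_le_sub_mul hH htwist z (show b ≤ z by linarith)
    have hdist : ρ * K ≤ ρ * (z - b) := mul_le_mul_of_nonneg_left (by linarith) hρ.le
    linarith [neg_abs_le (D1 H z z), neg_abs_le (deriv u z), neg_abs_le c, hB z, hU z]

theorem laxOleinik_integrand_eq_of_graph_step {ρ c α a b : ℝ} {u : ℝ → ℝ} {F : ℝ × ℝ → ℝ × ℝ}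
    (hH : ContDiff ℝ 2 (uncurry H)) (hper : ∀ x x', H (x + 1) (x' + 1) = H x x')
    (hρ : 0 < ρ) (htwist : ∀ x x', D12 H x x' ≤ -ρ) (hF : Injective F)
    (hFdef : ∀ x r x' r', F (x, r) = (x', r') ↔ (r = -D1 H x x' ∧ r' = D2 H x x'))
    (hu : ContDiff ℝ 1 u) (huper : Periodic u 1)
    (hinv : MapsTo F {p : ℝ × ℝ | p.2 = c + deriv u p.1} {p : ℝ × ℝ | p.2 = c + deriv u p.1})
    (hα : ⨅ y : ℝ, (u y + H y b - c * (b - y)) = u b - α)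
    (hab : F (a, c + deriv u a) = (b, c + deriv u b)) :
    u a + H a b - c * (b - a) = u b - α := by
  obtain ⟨y, hy⟩ := exists_laxOleinik_minimizer hH hper hρ htwist hu huper c b
  have hmin : u y + H y b - c * (b - y) = u b - α :=
    hα ▸ le_antisymm (le_ciInf hy) (ciInf_le ⟨_, forall_mem_range.2 hy⟩ y)
  have hcrit : c + deriv u y = -D1 H y b := by
    have hloc : IsLocalMin (fun z => u z + H z b - c * (b - z)) y :=
      Filter.Eventually.of_forall hy
    have h := hloc.hasDerivAt_eq_zero
      (hasDerivAt_laxOleinik_integrand (hH.differentiable (by norm_num))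
        (hu.differentiable one_ne_zero) c b y)
    linarith
  have hFy : F (y, c + deriv u y) = (b, c + deriv u b) := by
    have h := (hFdef y _ b (D2 H y b)).2 ⟨hcrit, rfl⟩
    have hgraph : (F (y, c + deriv u y)).2 = c + deriv u (F (y, c + deriv u y)).1 :=
      hinv (show (y, c + deriv u y) ∈ {p : ℝ × ℝ | p.2 = c + deriv u p.1} from rfl)
    rw [h] at hgraph ⊢
    exact Prod.ext rfl hgraph
  obtain rfl : y = a := congrArg Prod.fst (hF (hFy.trans hab.symm))
  exact hmin

end GeneratingFunction

theorem iterate_apply_eq_of_mapsTo {F : ℝ × ℝ → ℝ × ℝ} {g : ℝ → ℝ}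
    (hinv : MapsTo F {p : ℝ × ℝ | p.2 = g p.1} {p : ℝ × ℝ | p.2 = g p.1}) (x₀ : ℝ)
    {x : ℕ → ℝ} (hx : ∀ k, x k = (F^[k] (x₀, g x₀)).1) (k : ℕ) :
    F^[k] (x₀, g x₀) = (x k, g (x k)) := by
  have hgraph : (F^[k] (x₀, g x₀)).2 = g (F^[k] (x₀, g x₀)).1 := hinv.iterate k rfl
  rw [← hx k] at hgraph
  exact Prod.ext (hx k).symm hgraph

theorem stmt15_general (H : ℝ → ℝ → ℝ) (ρ : ℝ) (F : ℝ × ℝ → ℝ × ℝ)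
    (hH : ContDiff ℝ 2 (Function.uncurry H))
    (hper : ∀ x x', H (x + 1) (x' + 1) = H x x')
    (hρ : 0 < ρ) (htwist : ∀ x x', D12 H x x' ≤ -ρ)
    (hFbij : Function.Bijective F)
    (hFdef : ∀ x r x' r', F (x, r) = (x', r') ↔ (r = -D1 H x x' ∧ r' = D2 H x x'))
    (u : ℝ → ℝ) (hu : ContDiff ℝ 1 u) (huper : ∀ x, u (x + 1) = u x) (c : ℝ)
    (hinv : Set.BijOn F {p : ℝ × ℝ | p.2 = c + deriv u p.1}
      {p : ℝ × ℝ | p.2 = c + deriv u p.1})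
    (p : ℤ) (q : ℕ)
    (hperiodic : ∀ x : ℝ, F^[q] (x, c + deriv u x) = (x + p, c + deriv u x))
    (α : ℝ) (hα : ∀ x : ℝ, (⨅ y : ℝ, (u y + H y x - c * (x - y))) = u x - α)
    (x₀ : ℝ) (x : ℕ → ℝ) (hx : ∀ k, x k = (F^[k] (x₀, c + deriv u x₀)).1) :
    ∑ k ∈ Finset.range q, H (x k) (x (k + 1)) = c * p - q * α := by
  have horbit := iterate_apply_eq_of_mapsTo (g := fun t => c + deriv u t) hinv.mapsTo x₀ hx
  have hstep (k : ℕ) :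
      F (x k, c + deriv u (x k)) = (x (k + 1), c + deriv u (x (k + 1))) := by
    rw [← horbit, ← horbit, iterate_succ_apply']
  have hcalibrated (k : ℕ) : H (x k) (x (k + 1)) =
      (u (x (k + 1)) + c * x (k + 1)) - (u (x k) + c * x k) - α := by
    linarith [laxOleinik_integrand_eq_of_graph_step hH hper hρ htwist hFbij.injective hFdef hu
      huper hinv.mapsTo (hα _) (hstep k)]
  have hxq : x q = x 0 + p := by rw [hx, hx, hperiodic, iterate_zero_apply]
  have hu_shift : u (x 0 + p) = u (x 0) := by simpa using (Periodic.int_mul huper p) (x 0)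
  rw [Finset.sum_congr rfl fun k _ => hcalibrated k, Finset.sum_sub_distrib,
    Finset.sum_range_sub (fun k => u (x k) + c * x k), hxq, hu_shift]
  simp only [Finset.sum_const, Finset.card_range, nsmul_eq_mul]
  ring

/-- Action of an orbit on a `(p, q)`-periodic invariant graph: with `α` the weak KAM
constant of `u` (i.e. `inf_y (u(y) + H(y, x) - c(x - y)) = u(x) - α` for all `x`), the
orbit `x_k = π₁F^k(x₀, c + u'(x₀))` satisfies `Σ_{k<q} H(x_k, x_{k+1}) = c·p - q·α`. -/
theorem stmt15 (H : ℝ → ℝ → ℝ) (ρ M : ℝ) (F : ℝ × ℝ → ℝ × ℝ)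
    (hH : ContDiff ℝ 2 (Function.uncurry H))
    (hper : ∀ x x', H (x + 1) (x' + 1) = H x x')
    (hρ : 0 < ρ) (htwist : ∀ x x', D12 H x x' ≤ -ρ)
    (hM : 0 < M)
    (hbound : ∀ x x', |D11 H x x'| ≤ M ∧ |D12 H x x'| ≤ M ∧ |D21 H x x'| ≤ M ∧
      |D22 H x x'| ≤ M)
    (hFbij : Function.Bijective F)
    (hFdef : ∀ x r x' r', F (x, r) = (x', r') ↔ (r = -D1 H x x' ∧ r' = D2 H x x'))
    (u : ℝ → ℝ) (hu : ContDiff ℝ 1 u) (huper : ∀ x, u (x + 1) = u x) (c : ℝ)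
    (hinv : Set.BijOn F {p : ℝ × ℝ | p.2 = c + deriv u p.1}
      {p : ℝ × ℝ | p.2 = c + deriv u p.1})
    (p : ℤ) (q : ℕ) (hq : 1 ≤ q)
    (hperiodic : ∀ x : ℝ, F^[q] (x, c + deriv u x) = (x + p, c + deriv u x))
    (α : ℝ) (hα : ∀ x : ℝ, (⨅ y : ℝ, (u y + H y x - c * (x - y))) = u x - α)
    (x₀ : ℝ) (x : ℕ → ℝ) (hx : ∀ k, x k = (F^[k] (x₀, c + deriv u x₀)).1) :
    ∑ k ∈ Finset.range q, H (x k) (x (k + 1)) = c * p - q * α :=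
  stmt15_general H ρ F hH hper hρ htwist hFbij hFdef u hu huper c hinv p q hperiodic α hα x₀ x hx
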